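/- arXiv:2009.14106 — 2 statements merged into one kernel-verified Lean document; each statement's English description precedes it below -/
import Mathlib

section
/- Let s_n ↓ 0. Then there exist N ∈ ℕ and a continuous function φ : [0,1] → [0,1] such that for all n ≥ N, the oscillation of φ on every subinterval of [0,1] of length 2^{-n} is at least s_n. -/
/-!
Take `φ = ∑ c_j T(2 ^ m_j x)`, where `T` is the distance to the nearest integer and `m` grows fast.
If `m_k < n ≤ m_{k+1}`, every interval of length `2⁻ⁿ` contains two neighbouring points of the grid
`2^-(m_{k+1}+1) ℤ`. There all terms of higher frequency vanish, the `(k+1)`-st term jumps by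
`c_{k+1} / 2`, and the lower terms, whose Lipschitz constants add up to at most `2 ^ (m_k + 1)`,
move by at most `2 ^ (m_k - m_{k+1})`. With `c_{k+1} = 2 s(m_k) + 2^-(k+2)` and
`m_{k+1} ≥ m_k + k + 3` the jump beats `s(m_k) ≥ s_n`; taking `s(m_k) ≤ 2^-(k+4)` keeps
`∑ c_j ≤ 2`, so `φ` maps into `[0, 1]`.
-/

open Set Filter Topology

noncomputable def triwave (x : ℝ) : ℝ := |x - round x|

lemma triwave_nonneg (x : ℝ) : 0 ≤ triwave x := abs_nonneg _

lemma triwave_le_half (x : ℝ) : triwave x ≤ 1 / 2 := abs_sub_round x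

lemma lipschitzWith_one_triwave : LipschitzWith 1 triwave :=
  LipschitzWith.of_le_add fun x y =>
    calc triwave x ≤ |x - round y| := round_le x (round y)
      _ ≤ dist x y + triwave y := by
        rw [Real.dist_eq, triwave]; exact abs_sub_le x y _
      _ = triwave y + dist x y := add_comm _ _

lemma abs_triwave_sub_triwave_le (x y : ℝ) : |triwave x - triwave y| ≤ |x - y| := by
  simpa [Real.dist_eq] using lipschitzWith_one_triwave.dist_le_mul x y

lemma continuous_triwave : Continuous triwave := lipschitzWith_one_triwave.continuous

lemma triwave_intCast (k : ℤ) : triwave k = 0 := by simp [triwave]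

lemma triwave_intCast_add_half (k : ℤ) : triwave (k + 1 / 2) = 1 / 2 := by
  have hround : round ((k : ℝ) + 1 / 2) = k + 1 := by
    rw [round_eq, add_assoc, add_halves, ← Int.cast_one, ← Int.cast_add, Int.floor_intCast]
  rw [triwave, hround]
  norm_num [abs_of_neg]

lemma abs_triwave_half_sub_triwave_half (l : ℤ) :
    |triwave (l / 2) - triwave ((l + 1) / 2)| = 1 / 2 := by
  rcases Int.even_or_odd' l with ⟨k, rfl | rfl⟩
  · rw [show ((2 * k : ℤ) : ℝ) / 2 = k by push_cast; ring,
      show (((2 * k : ℤ) : ℝ) + 1) / 2 = k + 1 / 2 by push_cast; ring,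
      triwave_intCast, triwave_intCast_add_half]
    norm_num
  · rw [show ((2 * k + 1 : ℤ) : ℝ) / 2 = k + 1 / 2 by push_cast; ring,
      show (((2 * k + 1 : ℤ) : ℝ) + 1) / 2 = ((k + 1 : ℤ) : ℝ) by push_cast; ring,
      triwave_intCast, triwave_intCast_add_half]
    norm_num

lemma two_pow_mul_div_two_pow {M N : ℕ} (h : M ≤ N) (p : ℤ) :
    (2 : ℝ) ^ N * (p / 2 ^ M) = ((p * 2 ^ (N - M) : ℤ) : ℝ) := by
  obtain ⟨d, rfl⟩ := Nat.exists_eq_add_of_le h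
  rw [Nat.add_sub_cancel_left, pow_add]
  push_cast
  field_simp

lemma two_pow_div_two_pow_le {a b d : ℕ} (h : a + d ≤ b) :
    (2 : ℝ) ^ a / 2 ^ b ≤ 2⁻¹ ^ d := by
  rw [div_le_iff₀ (by positivity), inv_pow, ← div_eq_inv_mul,
    le_div_iff₀ (by positivity), ← pow_add]
  exact pow_le_pow_right₀ one_le_two h

lemma exists_intCast_div_mem_Icc {a b d : ℝ} (hd : 0 < d) (h : a + 2 / d ≤ b) :
    ∃ p : ℤ, (p : ℝ) / d ∈ Icc a b ∧ ((p : ℝ) + 1) / d ∈ Icc a b := by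
  have hceil : (⌈a * d⌉ : ℝ) < a * d + 1 := Int.ceil_lt_add_one _
  have hleft : a ≤ ⌈a * d⌉ / d := (le_div_iff₀ hd).2 (Int.le_ceil _)
  have hstep : (⌈a * d⌉ : ℝ) / d ≤ (⌈a * d⌉ + 1) / d := by gcongr; linarith
  have hright : ((⌈a * d⌉ : ℝ) + 1) / d ≤ b :=
    calc ((⌈a * d⌉ : ℝ) + 1) / d ≤ (a * d + 2) / d :=
          div_le_div_of_nonneg_right (by linarith) hd.le
      _ = a + 2 / d := by field_simp
      _ ≤ b := h
  exact ⟨⌈a * d⌉, ⟨hleft, hstep.trans hright⟩, ⟨hleft.trans hstep, hright⟩⟩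

lemma abs_sub_le_sSup_abs_sub {φ : ℝ → ℝ} {I : Set ℝ} {u v : ℝ} (hφ : MapsTo φ I (Icc u v))
    {x y : ℝ} (hx : x ∈ I) (hy : y ∈ I) :
    |φ x - φ y| ≤ sSup {t : ℝ | ∃ x ∈ I, ∃ y ∈ I, t = |φ x - φ y|} := by
  refine le_csSup ⟨v - u, ?_⟩ ⟨x, hx, y, hy, rfl⟩
  rintro t ⟨x', hx', y', hy', rfl⟩
  obtain ⟨hx₁, hx₂⟩ := hφ hx'
  obtain ⟨hy₁, hy₂⟩ := hφ hy'
  rw [abs_sub_le_iff]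
  constructor <;> linarith

lemma StrictMono.exists_lt_le_succ {m : ℕ → ℕ} (hm : StrictMono m) {n : ℕ} (hn : m 0 < n) :
    ∃ k, m k < n ∧ n ≤ m (k + 1) := by
  classical
  have hex : ∃ j, n ≤ m j := ⟨n, hm.le_apply⟩
  obtain ⟨k, hk⟩ : ∃ k, Nat.find hex = k + 1 :=
    Nat.exists_eq_succ_of_ne_zero fun h => (Nat.find_spec hex).not_gt (h ▸ hn)
  exact ⟨k, not_le.1 (Nat.find_min hex (by omega)), hk ▸ Nat.find_spec hex⟩

noncomputable def lacunaryTriwave (c : ℕ → ℝ) (m : ℕ → ℕ) (x : ℝ) : ℝ :=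
  ∑' j, c j * triwave (2 ^ m j * x)

section Lacunary

variable {c : ℕ → ℝ} {m : ℕ → ℕ}

lemma norm_mul_triwave_le (a t : ℝ) : ‖a * triwave t‖ ≤ |a| / 2 := by
  rw [Real.norm_eq_abs, abs_mul, abs_of_nonneg (triwave_nonneg t)]
  exact mul_le_mul_of_nonneg_left (triwave_le_half t) (abs_nonneg a) |>.trans_eq (by ring)

lemma summable_mul_triwave (hc : Summable c) (x : ℝ) :
    Summable fun j => c j * triwave (2 ^ m j * x) :=
  (hc.abs.div_const 2).of_norm_bounded fun _ => norm_mul_triwave_le _ _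

lemma continuous_lacunaryTriwave (hc : Summable c) : Continuous (lacunaryTriwave c m) :=
  continuous_tsum (fun _ => continuous_const.mul (continuous_triwave.comp (by fun_prop)))
    (hc.abs.div_const 2) fun _ _ => norm_mul_triwave_le _ _

lemma lacunaryTriwave_mem_Icc (hc0 : ∀ j, 0 ≤ c j) (hc : Summable c) (hsum : ∑' j, c j ≤ 2)
    (x : ℝ) : lacunaryTriwave c m x ∈ Icc 0 1 := by
  refine ⟨tsum_nonneg fun j => mul_nonneg (hc0 j) (triwave_nonneg _), ?_⟩
  calc lacunaryTriwave c m x ≤ ∑' j, c j / 2 :=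
        (summable_mul_triwave hc x).tsum_le_tsum
          (fun j => (mul_le_mul_of_nonneg_left (triwave_le_half _) (hc0 j)).trans_eq (by ring))
          (hc.div_const 2)
    _ = (∑' j, c j) / 2 := tsum_div_const
    _ ≤ 1 := by linarith

lemma StrictMono.sum_range_two_pow_le (hm : StrictMono m) (k : ℕ) :
    ∑ i ∈ Finset.range (k + 1), (2 : ℝ) ^ m i ≤ 2 ^ (m k + 1) := by
  induction k with
  | zero => simp [pow_succ]
  | succ k ih =>
    have hgap : (2 : ℝ) ^ (m k + 1) ≤ 2 ^ m (k + 1) :=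
      pow_le_pow_right₀ one_le_two (hm (Nat.lt_succ_self k))
    rw [Finset.sum_range_succ, pow_succ _ (m (k + 1))]
    linarith

lemma StrictMono.lacunaryTriwave_sub_eq_sum (hm : StrictMono m) (k : ℕ) (p q : ℤ) :
    lacunaryTriwave c m (p / 2 ^ (m (k + 1) + 1)) - lacunaryTriwave c m (q / 2 ^ (m (k + 1) + 1)) =
      ∑ i ∈ Finset.range (k + 2), (c i * triwave (2 ^ m i * (p / 2 ^ (m (k + 1) + 1))) -
        c i * triwave (2 ^ m i * (q / 2 ^ (m (k + 1) + 1)))) := by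
  have hvanish : ∀ r : ℤ, ∀ i ∉ Finset.range (k + 2),
      c i * triwave (2 ^ m i * (r / 2 ^ (m (k + 1) + 1))) = 0 := by
    intro r i hi
    have hki : k + 1 < i := by simp only [Finset.mem_range, not_lt] at hi; omega
    rw [two_pow_mul_div_two_pow (hm hki) r, triwave_intCast, mul_zero]
  rw [lacunaryTriwave, lacunaryTriwave, tsum_eq_sum (hvanish p), tsum_eq_sum (hvanish q),
    Finset.sum_sub_distrib]

lemma StrictMono.sub_le_abs_lacunaryTriwave_sub (hm : StrictMono m) (hc0 : ∀ j, 0 ≤ c j)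
    (hc1 : ∀ j, c j ≤ 1) (k : ℕ) (p : ℤ) :
    c (k + 1) / 2 - 2 ^ m k / 2 ^ m (k + 1) ≤
      |lacunaryTriwave c m (p / 2 ^ (m (k + 1) + 1)) -
        lacunaryTriwave c m ((p + 1) / 2 ^ (m (k + 1) + 1))| := by
  set M := m (k + 1) + 1
  set d : ℕ → ℝ := fun i =>
    c i * triwave (2 ^ m i * (p / 2 ^ M)) - c i * triwave (2 ^ m i * ((p + 1) / 2 ^ M))
  have hmain : |d (k + 1)| = c (k + 1) / 2 := by
    have hp : ∀ r : ℝ, (2 : ℝ) ^ m (k + 1) * (r / 2 ^ M) = r / 2 := fun r => by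
      rw [pow_succ]; field_simp
    simp only [d, hp, ← mul_sub, abs_mul, abs_of_nonneg (hc0 _), abs_triwave_half_sub_triwave_half]
    ring
  have hlow : ∀ i, |d i| ≤ 2 ^ m i / 2 ^ M := fun i => by
    have hstep : |(2 : ℝ) ^ m i * (p / 2 ^ M) - 2 ^ m i * ((p + 1) / 2 ^ M)| = 2 ^ m i / 2 ^ M := by
      rw [← mul_sub, ← sub_div, sub_add_cancel_left, abs_mul, abs_div, abs_neg]
      simp [div_eq_mul_inv]
    simp only [d, ← mul_sub, abs_mul, abs_of_nonneg (hc0 _)]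
    calc c i * |_| ≤ 1 * (2 ^ m i / 2 ^ M) :=
          mul_le_mul (hc1 i) ((abs_triwave_sub_triwave_le _ _).trans_eq hstep) (abs_nonneg _)
            zero_le_one
      _ = 2 ^ m i / 2 ^ M := one_mul _
  have hlows : |∑ i ∈ Finset.range (k + 1), d i| ≤ 2 ^ m k / 2 ^ m (k + 1) :=
    calc |∑ i ∈ Finset.range (k + 1), d i| ≤ ∑ i ∈ Finset.range (k + 1), 2 ^ m i / 2 ^ M :=
          (Finset.abs_sum_le_sum_abs _ _).trans (Finset.sum_le_sum fun i _ => hlow i)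
      _ ≤ 2 ^ (m k + 1) / 2 ^ M := by
          rw [← Finset.sum_div]; gcongr; exact hm.sum_range_two_pow_le k
      _ = 2 ^ m k / 2 ^ m (k + 1) := by simp only [M, pow_succ]; field_simp
  have hsplit := hm.lacunaryTriwave_sub_eq_sum (c := c) k p (p + 1)
  push_cast at hsplit
  rw [hsplit, Finset.sum_range_succ]
  have htri : |d (k + 1)| ≤ |∑ i ∈ Finset.range (k + 1), d i + d (k + 1)| +
      |∑ i ∈ Finset.range (k + 1), d i| := by
    simpa only [add_sub_cancel_left] using abs_sub (∑ i ∈ Finset.range (k + 1), d i + d (k + 1))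
      (∑ i ∈ Finset.range (k + 1), d i)
  linarith

end Lacunary

lemma exists_seq_add_le_succ_of_eventually {P : ℕ → ℕ → Prop}
    (h : ∀ k, ∀ᶠ n in atTop, P k n) (g : ℕ → ℕ) :
    ∃ m : ℕ → ℕ, (∀ k, m k + g k ≤ m (k + 1)) ∧ ∀ k, P k (m k) := by
  choose N hN using fun k => eventually_atTop.1 (h k)
  refine ⟨fun k => N k + ∑ i ∈ Finset.range k, (N i + g i), fun k => ?_,
    fun k => hN k _ (Nat.le_add_right _ _)⟩
  simp only [Finset.sum_range_succ]
  omega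

lemma summable_and_tsum_le_two_of_mem_Icc {c : ℕ → ℝ} (hc : ∀ j, c j ∈ Icc 0 (2⁻¹ ^ j)) :
    Summable c ∧ ∑' j, c j ≤ 2 := by
  have hgeom : Summable fun j : ℕ => (2⁻¹ : ℝ) ^ j :=
    summable_geometric_of_lt_one (by norm_num) (by norm_num)
  have hcsum : Summable c := hgeom.of_nonneg_of_le (fun j => (hc j).1) fun j => (hc j).2
  exact ⟨hcsum, (hcsum.tsum_le_tsum (fun j => (hc j).2) hgeom).trans_eq tsum_geometric_inv_two⟩

noncomputable def amplitude (s : ℕ → ℝ) (m : ℕ → ℕ) : ℕ → ℝ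
  | 0 => 0
  | k + 1 => 2 * s (m k) + 2⁻¹ ^ (k + 2)

section Amplitude

variable {s : ℕ → ℝ} {m : ℕ → ℕ}

lemma amplitude_mem_Icc (hs0 : ∀ k, 0 ≤ s (m k)) (hs : ∀ k, s (m k) ≤ 2⁻¹ ^ (k + 4)) :
    ∀ j, amplitude s m j ∈ Icc 0 (2⁻¹ ^ j)
  | 0 => by simp [amplitude]
  | k + 1 => by
    have h4 : (2⁻¹ : ℝ) ^ (k + 4) = 2⁻¹ ^ (k + 1) / 8 := by ring
    have h2 : (2⁻¹ : ℝ) ^ (k + 2) = 2⁻¹ ^ (k + 1) / 2 := by ring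
    have hpos : (0 : ℝ) < 2⁻¹ ^ (k + 1) := by positivity
    have hsk₀ := hs0 k
    have hsk := hs k
    constructor <;> simp only [amplitude] <;> linarith

lemma le_amplitude_succ_div_two_sub {k : ℕ} (hgap : m k + (k + 3) ≤ m (k + 1)) :
    s (m k) ≤ amplitude s m (k + 1) / 2 - 2 ^ m k / 2 ^ m (k + 1) := by
  have herr := two_pow_div_two_pow_le hgap
  have h3 : (2⁻¹ : ℝ) ^ (k + 3) = 2⁻¹ ^ (k + 2) / 2 := by ring
  simp only [amplitude]
  linarith

end Amplitude

/-- Given `s_n ↓ 0` there exist `N ∈ ℕ` and a continuous `φ : [0,1] → [0,1]`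
such that for all `n ≥ N`, the oscillation of `φ` on every subinterval of
`[0,1]` of length `2^{-n}` is at least `s_n`. -/
theorem stmt12 (s : ℕ → ℝ) (hanti : Antitone s) (hlim : Tendsto s atTop (𝓝 0)) :
    ∃ (N : ℕ) (φ : ℝ → ℝ), Continuous φ ∧ MapsTo φ (Icc 0 1) (Icc 0 1) ∧
      ∀ n, N ≤ n → ∀ a b : ℝ, Icc a b ⊆ Icc 0 1 → b - a = 2⁻¹ ^ n →
        s n ≤ sSup {t : ℝ | ∃ x ∈ Icc a b, ∃ y ∈ Icc a b, t = |φ x - φ y|} := by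
  obtain ⟨m, hgap, hsm⟩ := exists_seq_add_le_succ_of_eventually
    (fun k => hlim.eventually (eventually_le_nhds (by positivity : (0 : ℝ) < 2⁻¹ ^ (k + 4))))
    (fun k => k + 3)
  have hm : StrictMono m := strictMono_nat_of_lt_succ fun k => by linarith [hgap k]
  have hc := amplitude_mem_Icc (fun k => hanti.le_of_tendsto hlim (m k)) hsm
  obtain ⟨hcsum, hcbound⟩ := summable_and_tsum_le_two_of_mem_Icc hc
  have hφ := lacunaryTriwave_mem_Icc (m := m) (fun j => (hc j).1) hcsum hcbound
  refine ⟨m 0 + 1, lacunaryTriwave (amplitude s m) m, continuous_lacunaryTriwave hcsum,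
    fun x _ => hφ x, fun n hn a b _ hlen => ?_⟩
  obtain ⟨k, hkn, hnk⟩ := hm.exists_lt_le_succ hn
  have hmesh : a + 2 / 2 ^ (m (k + 1) + 1) ≤ b := by
    have : (2 : ℝ) / 2 ^ (m (k + 1) + 1) ≤ 2⁻¹ ^ n := by
      rw [pow_succ, div_mul_cancel_right₀ two_ne_zero, ← inv_pow]
      exact pow_le_pow_of_le_one (by norm_num) (by norm_num) hnk
    linarith
  obtain ⟨p, hx, hy⟩ := exists_intCast_div_mem_Icc (by positivity) hmesh
  calc s n ≤ s (m k) := hanti hkn.le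
    _ ≤ amplitude s m (k + 1) / 2 - 2 ^ m k / 2 ^ m (k + 1) :=
      le_amplitude_succ_div_two_sub (hgap k)
    _ ≤ _ := hm.sub_le_abs_lacunaryTriwave_sub (fun j => (hc j).1)
      (fun j => (hc j).2.trans (pow_le_one₀ (by norm_num) (by norm_num))) k p
    _ ≤ _ := abs_sub_le_sSup_abs_sub (fun x _ => hφ x) hx hy
end

section
/- Let d ≥ 2. For every compact set 𝒦 ⊆ Homeo([0,1]^d) and every ε > 0 there exists a homeomorphism f of [0,1]^d with ‖f - id‖ ≤ 2ε such that for every g ∈ 𝒦 and every x ∈ [0,1]^d, limsup_{y→x} |g(f(x)) - g(f(y))| / |x - y| = ∞. In particular, g ∘ f is nowhere differentiable for every g ∈ 𝒦. -/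
/-!
Replace the coordinate `x₁` of the cube by `h (x₁ + c(x₀) · min(x₁, 1 - x₁))`, keeping all
other coordinates. Here `c(s) = ∑ aₙ cos (2π s / Pₙ)` is a lacunary cosine series whose periods
`Pₙ` shrink so fast that `c` oscillates by `aₙ / 2` within distance `Pₙ` of every point, and `h`
is a homeomorphism of `[0,1]` close to the identity that rises by `δₖ` on `[0, Sₖ]` and on
`[1 - Sₖ, 1]`. By compactness all `g ∈ 𝒦` share a modulus of injectivity `η`:
`δ ≤ dist a b → η δ ≤ dist (g a) (g b)`. Choosing `(n + 1) Pₙ ≤ η(σₙ)` and `(k + 1) Sₖ ≤ η(δₖ)`,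
where `σₙ` is the separation that the oscillation of `c` produces, moving an interior point by
`Pₙ` in `x₀`, or a point of a face `x₁ ∈ {0, 1}` by `Sₖ` in `x₁`, moves `g (f x)` by more than
`n + 1` times the displacement.
-/


open MeasureTheory Metric Set Filter Topology

/-- The unit cube `[0,1]^d` in Euclidean space. -/
def cube (d : ℕ) : Set (EuclideanSpace ℝ (Fin d)) := {x | ∀ i, x i ∈ Icc (0 : ℝ) 1}

/-- The space of homeomorphisms of the cube `[0,1]^d`, as a subspace of the
space of continuous self-maps of the cube (with the uniform topology). -/
def HomeoCube (d : ℕ) : Type := {g : C(↥(cube d), ↥(cube d)) // IsHomeomorph g}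

noncomputable instance (d : ℕ) : TopologicalSpace (HomeoCube d) :=
  instTopologicalSpaceSubtype

open Real Function

lemma sub_le_tsum_sub_tsum_of_monotone {f : ℕ → ℝ → ℝ} (hf : ∀ k, Monotone (f k))
    (hs : ∀ t, Summable (f · t)) {t t' : ℝ} (h : t ≤ t') (k : ℕ) :
    f k t' - f k t ≤ ∑' j, f j t' - ∑' j, f j t := by
  rw [← (hs t').tsum_sub (hs t)]
  exact ((hs t').sub (hs t)).le_tsum k fun j _ => sub_nonneg.2 (hf j h)

lemma abs_le_abs_tsum_add {b : ℕ → ℝ} (hb : Summable b) (n : ℕ) :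
    |b n| ≤ |∑' m, b m| + ∑ m ∈ Finset.range n, |b m| + |∑' m, b (m + (n + 1))| := by
  rw [← hb.sum_add_tsum_nat_add (n + 1), Finset.sum_range_succ]
  set L := ∑ m ∈ Finset.range n, b m
  set R := ∑' m, b (m + (n + 1))
  have hL : |L| ≤ ∑ m ∈ Finset.range n, |b m| := Finset.abs_sum_le_sum_abs b _
  have h₁ := abs_sub (L + b n + R - L) R
  have h₂ := abs_sub (L + b n + R) L
  calc |b n| = |(L + b n + R) - L - R| := by ring_nf
    _ ≤ _ := by linarith

noncomputable def unitRamp (u : ℝ) : ℝ := max 0 (min 1 u)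

lemma unitRamp_nonneg (u : ℝ) : 0 ≤ unitRamp u := le_max_left _ _

lemma unitRamp_le_one (u : ℝ) : unitRamp u ≤ 1 := max_le zero_le_one (min_le_left _ _)

lemma monotone_unitRamp : Monotone unitRamp := fun _ _ h => max_le_max le_rfl (min_le_min le_rfl h)

@[fun_prop]
lemma continuous_unitRamp : Continuous unitRamp := by unfold unitRamp; fun_prop

lemma unitRamp_of_nonpos {u : ℝ} (hu : u ≤ 0) : unitRamp u = 0 :=
  max_eq_left (min_le_of_right_le hu)

lemma unitRamp_of_one_le {u : ℝ} (hu : 1 ≤ u) : unitRamp u = 1 := by simp [unitRamp, hu]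

/-- Rises from `0` to `1` on `[S/4, S/2]` and from `1` to `2` on `[1 - S/2, 1 - S/4]`. -/
noncomputable def edgeBump (S t : ℝ) : ℝ :=
  unitRamp (4 * t / S - 1) + unitRamp (4 * (t - 1) / S + 2)

section edgeBump

variable {S : ℝ}

lemma edgeBump_nonneg (t : ℝ) : 0 ≤ edgeBump S t :=
  add_nonneg (unitRamp_nonneg _) (unitRamp_nonneg _)

lemma edgeBump_le_two (t : ℝ) : edgeBump S t ≤ 2 := by
  unfold edgeBump
  linarith [unitRamp_le_one (4 * t / S - 1), unitRamp_le_one (4 * (t - 1) / S + 2)]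

lemma continuous_edgeBump : Continuous (edgeBump S) := by
  unfold edgeBump; fun_prop

lemma monotone_edgeBump (hS : 0 < S) : Monotone (edgeBump S) := fun t t' h =>
  add_le_add (monotone_unitRamp (by gcongr)) (monotone_unitRamp (by gcongr))

lemma edgeBump_zero (hS : 0 < S) (hS₂ : S ≤ 2) : edgeBump S 0 = 0 := by
  have : 4 * (0 - 1) / S + 2 ≤ 0 := by
    rw [div_add' _ _ _ hS.ne', div_nonpos_iff]; right; constructor <;> linarith
  rw [edgeBump, unitRamp_of_nonpos this, unitRamp_of_nonpos (by simp)]; norm_num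

lemma edgeBump_one (hS : 0 < S) (hS₂ : S ≤ 2) : edgeBump S 1 = 2 := by
  have : 1 ≤ 4 * 1 / S - 1 := by rw [le_sub_iff_add_le, le_div_iff₀ hS]; linarith
  rw [edgeBump, unitRamp_of_one_le this, unitRamp_of_one_le (by simp)]; norm_num

lemma one_le_edgeBump (hS : 0 < S) {t : ℝ} (ht : S / 2 ≤ t) : 1 ≤ edgeBump S t := by
  have : 1 ≤ 4 * t / S - 1 := by rw [le_sub_iff_add_le, le_div_iff₀ hS]; linarith
  rw [edgeBump, unitRamp_of_one_le this]
  linarith [unitRamp_nonneg (4 * (t - 1) / S + 2)]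

lemma edgeBump_le_one (hS : 0 < S) {t : ℝ} (ht : t ≤ 1 - S / 2) : edgeBump S t ≤ 1 := by
  have : 4 * (t - 1) / S + 2 ≤ 0 := by
    rw [div_add' _ _ _ hS.ne', div_nonpos_iff]; right; constructor <;> linarith
  rw [edgeBump, unitRamp_of_nonpos this]
  linarith [unitRamp_le_one (4 * t / S - 1)]

end edgeBump

noncomputable def edgeStretch (δ S : ℕ → ℝ) (t : ℝ) : ℝ :=
  (1 - 2 * ∑' k, δ k) * t + ∑' k, δ k * edgeBump (S k) t

section edgeStretch

variable {δ S : ℕ → ℝ}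

lemma summable_mul_edgeBump (hδ : ∀ k, 0 ≤ δ k) (hδs : Summable δ) (t : ℝ) :
    Summable fun k => δ k * edgeBump (S k) t :=
  (hδs.mul_right 2).of_nonneg_of_le (fun k => mul_nonneg (hδ k) (edgeBump_nonneg t))
    fun k => mul_le_mul_of_nonneg_left (edgeBump_le_two t) (hδ k)

lemma continuous_edgeStretch (hδ : ∀ k, 0 ≤ δ k) (hδs : Summable δ) :
    Continuous (edgeStretch δ S) := by
  refine (continuous_const.mul continuous_id).add <|
    continuous_tsum (fun k => continuous_const.mul continuous_edgeBump) (hδs.mul_right 2)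
      fun k t => ?_
  rw [Real.norm_eq_abs, abs_of_nonneg (mul_nonneg (hδ k) (edgeBump_nonneg t))]
  exact mul_le_mul_of_nonneg_left (edgeBump_le_two t) (hδ k)

lemma edgeStretch_sub_ge (hδ : ∀ k, 0 ≤ δ k) (hδs : Summable δ) (hS : ∀ k, 0 < S k)
    {t t' : ℝ} (h : t ≤ t') (k : ℕ) :
    (1 - 2 * ∑' j, δ j) * (t' - t) + δ k * (edgeBump (S k) t' - edgeBump (S k) t) ≤
      edgeStretch δ S t' - edgeStretch δ S t := by
  have := sub_le_tsum_sub_tsum_of_monotone (f := fun k t => δ k * edgeBump (S k) t)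
    (fun k => (monotone_edgeBump (hS k)).const_mul (hδ k)) (summable_mul_edgeBump hδ hδs) h k
  simp only [edgeStretch]
  linarith

lemma edgeStretch_zero (hS : ∀ k, 0 < S k) (hS₂ : ∀ k, S k ≤ 2) : edgeStretch δ S 0 = 0 := by
  have h : ∀ k, edgeBump (S k) 0 = 0 := fun k => edgeBump_zero (hS k) (hS₂ k)
  simp [edgeStretch, h]

lemma edgeStretch_one (hS : ∀ k, 0 < S k) (hS₂ : ∀ k, S k ≤ 2) : edgeStretch δ S 1 = 1 := by
  have h : ∀ k, edgeBump (S k) 1 = 2 := fun k => edgeBump_one (hS k) (hS₂ k)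
  simp only [edgeStretch, h, tsum_mul_right]
  ring

lemma abs_edgeStretch_sub_self_le (hδ : ∀ k, 0 ≤ δ k) (hδs : Summable δ) {t : ℝ}
    (ht : t ∈ Icc (0 : ℝ) 1) : |edgeStretch δ S t - t| ≤ 2 * ∑' k, δ k := by
  have hD : 0 ≤ ∑' k, δ k := tsum_nonneg hδ
  have h₀ : 0 ≤ ∑' k, δ k * edgeBump (S k) t :=
    tsum_nonneg fun k => mul_nonneg (hδ k) (edgeBump_nonneg t)
  have h₂ : ∑' k, δ k * edgeBump (S k) t ≤ 2 * ∑' k, δ k := by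
    rw [← tsum_mul_left]
    refine (summable_mul_edgeBump hδ hδs t).tsum_le_tsum (fun k => ?_) (hδs.mul_left 2)
    linarith [mul_le_mul_of_nonneg_left (edgeBump_le_two (S := S k) t) (hδ k)]
  rw [edgeStretch, abs_le]
  constructor <;> nlinarith [ht.1, ht.2]

end edgeStretch

noncomputable def shear (c t : ℝ) : ℝ := t + c * min t (1 - t)

lemma shear_apply_zero (c : ℝ) : shear c 0 = 0 := by simp [shear]

lemma shear_apply_one (c : ℝ) : shear c 1 = 1 := by simp [shear]

lemma sub_le_shear_sub {c : ℝ} (hc : |c| ≤ 1 / 2) {t t' : ℝ} (h : t ≤ t') :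
    (t' - t) / 2 ≤ shear c t' - shear c t := by
  have hΔ : |min t' (1 - t') - min t (1 - t)| ≤ t' - t := by
    have := abs_min_sub_min_le_max t' (1 - t') t (1 - t)
    rwa [show 1 - t' - (1 - t) = -(t' - t) by ring, abs_neg, max_self,
      abs_of_nonneg (sub_nonneg.2 h)] at this
  have hc' : |c * (min t' (1 - t') - min t (1 - t))| ≤ (t' - t) / 2 := by
    rw [abs_mul]
    nlinarith [abs_nonneg c, abs_nonneg (min t' (1 - t') - min t (1 - t))]
  simp only [shear]
  linarith [neg_abs_le (c * (min t' (1 - t') - min t (1 - t)))]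

lemma shear_mem_Icc {c : ℝ} (hc : |c| ≤ 1 / 2) {t : ℝ} (ht : t ∈ Icc (0 : ℝ) 1) :
    shear c t ∈ Icc (0 : ℝ) 1 := by
  have h₀ := sub_le_shear_sub hc ht.1
  have h₁ := sub_le_shear_sub hc ht.2
  rw [shear_apply_zero] at h₀
  rw [shear_apply_one] at h₁
  constructor <;> linarith [ht.1, ht.2]

lemma norm_mul_cos_le {a : ℝ} (ha : 0 ≤ a) (u : ℝ) : ‖a * cos u‖ ≤ a := by
  rw [Real.norm_eq_abs, abs_mul, abs_of_nonneg ha]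
  exact mul_le_of_le_one_right ha (abs_cos_le_one u)

lemma abs_cos_sub_cos_div_le {p : ℝ} (hp : 0 < p) (z s : ℝ) :
    |cos (2 * π * z / p) - cos (2 * π * s / p)| ≤ 2 * π / p * |z - s| :=
  calc _ ≤ |2 * π * z / p - 2 * π * s / p| := abs_cos_sub_cos_le _ _
    _ = 2 * π / p * |z - s| := by
      rw [show 2 * π * z / p - 2 * π * s / p = 2 * π / p * (z - s) by ring, abs_mul,
        abs_of_pos (by positivity)]

lemma exists_one_le_abs_cos_sub {p s : ℝ} (hp : 0 < p) (hp₁ : p ≤ 1) (hs : s ∈ Icc (0 : ℝ) 1) :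
    ∃ z ∈ Icc (0 : ℝ) 1, |z - s| ≤ p ∧ 1 ≤ |cos (2 * π * z / p) - cos (2 * π * s / p)| := by
  set f : ℝ → ℝ := fun z => cos (2 * π * z / p)
  have hf : Periodic f p := fun z => by
    simp only [f]
    rw [show 2 * π * (z + p) / p = 2 * π * z / p + 2 * π by field_simp]
    exact cos_add_two_pi _
  obtain ⟨w, hw⟩ : ∃ w, 1 ≤ |f w - f s| := by
    rcases le_total 0 (f s) with h | h
    · refine ⟨p / 2, ?_⟩
      have hπ : f (p / 2) = -1 := by
        simp only [f]
        rw [show 2 * π * (p / 2) / p = π by field_simp, cos_pi]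
      rw [hπ, abs_sub_comm, abs_of_nonneg (by linarith)]
      linarith
    · refine ⟨0, ?_⟩
      rw [show f 0 = 1 by simp [f], abs_of_nonneg (by linarith)]
      linarith
  -- a window of length `p` inside `[0, 1]` containing `s`
  obtain ⟨z, ⟨hz₁, hz₂⟩, hfz⟩ := hf.exists_mem_Ico hp w (min s (1 - p))
  have h₁ : s - p ≤ min s (1 - p) := le_min (by linarith) (by linarith [hs.2])
  have h₂ : min s (1 - p) ≤ s := min_le_left _ _
  have h₃ : min s (1 - p) ≤ 1 - p := min_le_right _ _
  have h₄ : 0 ≤ min s (1 - p) := le_min hs.1 (by linarith)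
  exact ⟨z, ⟨by linarith, by linarith⟩, abs_le.2 ⟨by linarith, by linarith⟩, by rwa [hfz] at hw⟩

noncomputable def lacunaryCos (a P : ℕ → ℝ) (s : ℝ) : ℝ := ∑' n, a n * cos (2 * π * s / P n)

section lacunaryCos

variable {a P : ℕ → ℝ}

lemma summable_mul_cos (ha : ∀ n, 0 ≤ a n) (has : Summable a) (u : ℕ → ℝ) :
    Summable fun n => a n * cos (u n) :=
  has.of_norm_bounded fun n => norm_mul_cos_le (ha n) _

lemma continuous_lacunaryCos (ha : ∀ n, 0 ≤ a n) (has : Summable a) :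
    Continuous (lacunaryCos a P) :=
  continuous_tsum (fun n => by fun_prop) has fun n _ => norm_mul_cos_le (ha n) _

lemma abs_lacunaryCos_le (ha : ∀ n, 0 ≤ a n) (has : Summable a) (s : ℝ) :
    |lacunaryCos a P s| ≤ ∑' n, a n :=
  tsum_of_norm_bounded has.hasSum fun n => norm_mul_cos_le (ha n) _

theorem exists_half_le_abs_lacunaryCos_sub (ha : ∀ n, 0 ≤ a n) (has : Summable a)
    (htail : ∀ n, ∑' m, a (m + (n + 1)) ≤ a n / 8) (hP : ∀ n, 0 < P n) {n : ℕ} (hPn : P n ≤ 1)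
    (hlac : (∑ m ∈ Finset.range n, a m * (2 * π / P m)) * P n ≤ a n / 4)
    {s : ℝ} (hs : s ∈ Icc (0 : ℝ) 1) :
    ∃ z ∈ Icc (0 : ℝ) 1, |z - s| ≤ P n ∧ a n / 2 ≤ |lacunaryCos a P z - lacunaryCos a P s| := by
  obtain ⟨z, hz, hzs, hcos⟩ := exists_one_le_abs_cos_sub (hP n) hPn hs
  refine ⟨z, hz, hzs, ?_⟩
  set b : ℕ → ℝ := fun m => a m * (cos (2 * π * z / P m) - cos (2 * π * s / P m))
  have hdiff : lacunaryCos a P z - lacunaryCos a P s = ∑' m, b m := by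
    simp only [lacunaryCos, b, mul_sub]
    exact ((summable_mul_cos ha has _).tsum_sub (summable_mul_cos ha has _)).symm
  have hb : Summable b := by
    simpa only [b, mul_sub] using (summable_mul_cos ha has _).sub (summable_mul_cos ha has _)
  have hb₂ : ∀ m, ‖b m‖ ≤ 2 * a m := fun m => by
    rw [Real.norm_eq_abs, abs_mul, abs_of_nonneg (ha m)]
    have := abs_sub (cos (2 * π * z / P m)) (cos (2 * π * s / P m))
    nlinarith [abs_cos_le_one (2 * π * z / P m), abs_cos_le_one (2 * π * s / P m), ha m]
  have hbn : a n ≤ |b n| := by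
    rw [abs_mul, abs_of_nonneg (ha n)]
    exact le_mul_of_one_le_right (ha n) hcos
  -- the earlier terms have periods much longer than `P n`, hence barely move
  have hhead : ∑ m ∈ Finset.range n, |b m| ≤ a n / 4 := by
    refine le_trans ?_ hlac
    rw [Finset.sum_mul]
    refine Finset.sum_le_sum fun m _ => ?_
    rw [abs_mul, abs_of_nonneg (ha m), mul_assoc (a m)]
    have hPm := hP m
    exact mul_le_mul_of_nonneg_left ((abs_cos_sub_cos_div_le hPm z s).trans (by gcongr)) (ha m)
  have htail' : |∑' m, b (m + (n + 1))| ≤ a n / 4 := by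
    have hs' := ((summable_nat_add_iff (n + 1)).2 has).hasSum.mul_left 2
    have := tsum_of_norm_bounded hs' fun m => hb₂ (m + (n + 1))
    rw [Real.norm_eq_abs] at this
    linarith [htail n]
  have := abs_le_abs_tsum_add hb n
  rw [hdiff]
  linarith

end lacunaryCos

noncomputable def lacunaryPeriod (a b : ℕ → ℝ) (n : ℕ) : ℝ :=
  min (b n) (a n / (4 * (1 + ∑ m : Fin n, a m * (2 * π / lacunaryPeriod a b m))))

section lacunaryPeriod

variable {a b : ℕ → ℝ}

lemma lacunaryPeriod_le (n : ℕ) : lacunaryPeriod a b n ≤ b n := by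
  rw [lacunaryPeriod]
  exact min_le_left _ _

lemma lacunaryPeriod_pos (ha : ∀ n, 0 < a n) (hb : ∀ n, 0 < b n) (n : ℕ) :
    0 < lacunaryPeriod a b n := by
  induction n using Nat.strong_induction_on with
  | _ n ih =>
    have : 0 ≤ ∑ m : Fin n, a m * (2 * π / lacunaryPeriod a b m) :=
      Finset.sum_nonneg fun m _ => by have := ih m m.2; have := ha m; positivity
    rw [lacunaryPeriod]
    exact lt_min (hb n) (by have := ha n; positivity)

lemma sum_mul_lacunaryPeriod_le (ha : ∀ n, 0 < a n) (hb : ∀ n, 0 < b n) (n : ℕ) :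
    (∑ m ∈ Finset.range n, a m * (2 * π / lacunaryPeriod a b m)) * lacunaryPeriod a b n ≤
      a n / 4 := by
  set L := ∑ m ∈ Finset.range n, a m * (2 * π / lacunaryPeriod a b m)
  have hL : 0 ≤ L := Finset.sum_nonneg fun m _ => by
    have := lacunaryPeriod_pos ha hb m; have := ha m; positivity
  have hP : lacunaryPeriod a b n ≤ a n / (4 * (1 + L)) := by
    rw [lacunaryPeriod, Fin.sum_univ_eq_sum_range (fun m => a m * (2 * π / lacunaryPeriod a b m))]
    exact min_le_right _ _
  calc L * lacunaryPeriod a b n ≤ (1 + L) * (a n / (4 * (1 + L))) :=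
        mul_le_mul (by linarith) hP (lacunaryPeriod_pos ha hb n).le (by linarith)
    _ = a n / 4 := by field_simp

lemma exists_tendsto_zero_succ_mul_le {η : ℕ → ℝ} (hη : ∀ n, 0 < η n) :
    ∃ ρ : ℕ → ℝ, Tendsto ρ atTop (𝓝 0) ∧ (∀ n, 0 < ρ n) ∧ (∀ n, ρ n ≤ 1) ∧
      ∀ n, (n + 1) * ρ n ≤ η n := by
  refine ⟨fun n => min (η n) 1 / (n + 1), ?_, fun n => by have := hη n; positivity,
    fun n => ?_, fun n => ?_⟩
  · refine squeeze_zero (fun n => by have := hη n; positivity) (fun n => ?_)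
      tendsto_one_div_add_atTop_nhds_zero_nat
    exact div_le_div_of_nonneg_right (min_le_right _ _) (by positivity)
  · rw [div_le_one (by positivity)]
    linarith [min_le_right (η n) 1, (n.cast_nonneg : (0 : ℝ) ≤ n)]
  · rw [mul_div_cancel₀ _ (by positivity)]
    exact min_le_left _ _

theorem ContinuousMap.exists_pos_le_dist_of_isCompact {X Y : Type*} [PseudoMetricSpace X]
    [CompactSpace X] [MetricSpace Y] {𝒦 : Set C(X, Y)} (h𝒦 : IsCompact 𝒦)
    (hinj : ∀ g ∈ 𝒦, Injective g) {δ : ℝ} (hδ : 0 < δ) :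
    ∃ c > 0, ∀ g ∈ 𝒦, ∀ a b, δ ≤ dist a b → c ≤ dist (g a) (g b) := by
  have hD : IsCompact {p : X × X | δ ≤ dist p.1 p.2} :=
    (isClosed_le continuous_const continuous_dist).isCompact
  obtain ⟨c, hc, hmin⟩ := (h𝒦.prod hD).exists_forall_le'
    (f := fun q : C(X, Y) × X × X => dist (q.1 q.2.1) (q.1 q.2.2))
    (by fun_prop : Continuous _).continuousOn (a := 0) fun q hq => dist_pos.2 fun h => by
      have : δ ≤ dist q.2.1 q.2.2 := hq.2
      rw [hinj q.1 hq.1 h, dist_self] at this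
      linarith
  exact ⟨c, hc, fun g hg a b hab => hmin (g, a, b) ⟨hg, hab⟩⟩

lemma frequently_lt_dist_comp_div_dist {X Y Z : Type*} [MetricSpace X] [PseudoMetricSpace Y]
    [PseudoMetricSpace Z] {F : X → Y} {G : Y → Z} {η : ℝ → ℝ}
    (hG : ∀ δ > 0, ∀ a b, δ ≤ dist a b → η δ ≤ dist (G a) (G b)) {ρ σ : ℕ → ℝ}
    (hρ : Tendsto ρ atTop (𝓝 0)) (hσ : ∀ n, 0 < σ n) (hρσ : ∀ n, (n + 1) * ρ n ≤ η (σ n))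
    {x : X} (hsep : ∀ᶠ n in atTop, ∃ y, dist x y ≤ ρ n ∧ σ n ≤ dist (F x) (F y)) (C : ℝ) :
    ∃ᶠ y in 𝓝[≠] x, C < dist (G (F x)) (G (F y)) / dist x y := by
  rw [frequently_iff]
  intro U hU
  obtain ⟨r, hr, hrU⟩ := Metric.mem_nhdsWithin_iff.1 hU
  obtain ⟨n, ⟨y, hxy, hFxy⟩, hρr, hCn⟩ :=
    (hsep.and ((hρ.eventually (gt_mem_nhds hr)).and (eventually_ge_atTop ⌈C⌉₊))).exists
  have hyx : y ≠ x := by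
    rintro rfl
    rw [dist_self] at hFxy
    linarith [hσ n]
  have hpos : 0 < dist x y := dist_pos.2 hyx.symm
  refine ⟨y, hrU ⟨by rw [mem_ball, dist_comm]; linarith, hyx⟩, ?_⟩
  rw [lt_div_iff₀ hpos]
  have hC : C < n + 1 := (Nat.le_ceil C).trans_lt (by exact_mod_cast Nat.lt_succ_of_le hCn)
  calc C * dist x y < (n + 1) * dist x y := by gcongr
    _ ≤ (n + 1) * ρ n := by gcongr
    _ ≤ η (σ n) := hρσ n
    _ ≤ _ := hG _ (hσ n) _ _ hFxy

lemma isCompact_cube (d : ℕ) : IsCompact (cube d) := by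
  have : cube d = WithLp.toLp 2 '' univ.pi fun _ => Icc 0 1 :=
    Set.ext fun x => ⟨fun hx => ⟨x.ofLp, fun i _ => hx i, rfl⟩,
      by rintro ⟨y, hy, rfl⟩ i; exact hy i trivial⟩
  rw [this]
  exact (isCompact_univ_pi fun _ => isCompact_Icc).image (PiLp.continuous_toLp 2 _)

instance (d : ℕ) : CompactSpace (cube d) := isCompact_iff_compactSpace.mp (isCompact_cube d)

section fiberMap

variable {d : ℕ}

lemma exists_mem_cube_dist_eq {x : EuclideanSpace ℝ (Fin d)} (hx : x ∈ cube d) (j : Fin d)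
    {v : ℝ} (hv : v ∈ Icc (0 : ℝ) 1) :
    ∃ y ∈ cube d, dist x y = |v - x j| ∧ y j = v ∧ ∀ i ≠ j, y i = x i := by
  refine ⟨x + EuclideanSpace.single j (v - x j), fun i => ?_, ?_, by simp, fun i hi => by simp [hi]⟩
  · rcases eq_or_ne i j with rfl | hi
    · simpa using hv
    · simpa [hi] using hx i
  · rw [dist_self_add_right, PiLp.norm_single, Real.norm_eq_abs]

noncomputable def fiberMap (i₀ i₁ : Fin d) (Φ : ℝ → ℝ → ℝ) (x : EuclideanSpace ℝ (Fin d)) :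
    EuclideanSpace ℝ (Fin d) :=
  x + EuclideanSpace.single i₁ (Φ (x i₀) (x i₁) - x i₁)

variable {i₀ i₁ : Fin d} {Φ : ℝ → ℝ → ℝ}

@[simp]
lemma fiberMap_apply_self (x : EuclideanSpace ℝ (Fin d)) :
    fiberMap i₀ i₁ Φ x i₁ = Φ (x i₀) (x i₁) := by
  simp [fiberMap]

@[simp]
lemma fiberMap_apply_of_ne (x : EuclideanSpace ℝ (Fin d)) {i : Fin d} (h : i ≠ i₁) :
    fiberMap i₀ i₁ Φ x i = x i := by
  simp [fiberMap, h]

lemma dist_fiberMap_self (x : EuclideanSpace ℝ (Fin d)) :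
    dist (fiberMap i₀ i₁ Φ x) x = |Φ (x i₀) (x i₁) - x i₁| := by
  rw [dist_comm, fiberMap, dist_self_add_right, PiLp.norm_single, Real.norm_eq_abs]

lemma abs_sub_le_dist_fiberMap (x y : EuclideanSpace ℝ (Fin d)) :
    |Φ (x i₀) (x i₁) - Φ (y i₀) (y i₁)| ≤ dist (fiberMap i₀ i₁ Φ x) (fiberMap i₀ i₁ Φ y) := by
  simpa only [fiberMap_apply_self, Real.dist_eq] using
    PiLp.dist_apply_le (fiberMap i₀ i₁ Φ x) (fiberMap i₀ i₁ Φ y) i₁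

lemma continuous_fiberMap (hΦ : Continuous (uncurry Φ)) : Continuous (fiberMap i₀ i₁ Φ) := by
  have hsingle : Continuous (EuclideanSpace.single (𝕜 := ℝ) i₁) :=
    (PiLp.continuous_toLp 2 _).comp (continuous_const.update i₁ continuous_id)
  have hcoord : Continuous fun x : EuclideanSpace ℝ (Fin d) => (x i₀, x i₁) := by fun_prop
  exact continuous_id.add (hsingle.comp ((hΦ.comp hcoord).sub (by fun_prop)))

theorem exists_homeoCube_eq_fiberMap (hne : i₀ ≠ i₁) (hΦ : Continuous (uncurry Φ))
    (hmono : ∀ s, StrictMono (Φ s)) (h₀ : ∀ s, Φ s 0 = 0) (h₁ : ∀ s, Φ s 1 = 1) :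
    ∃ f : HomeoCube d, ∀ x, (f.1 x : EuclideanSpace ℝ (Fin d)) = fiberMap i₀ i₁ Φ x := by
  have hmaps : ∀ x ∈ cube d, fiberMap i₀ i₁ Φ x ∈ cube d := fun x hx i => by
    rcases eq_or_ne i i₁ with rfl | h
    · rw [fiberMap_apply_self, ← h₀ (x i₀), ← h₁ (x i₀)]
      exact ⟨(hmono _).monotone (hx i).1, (hmono _).monotone (hx i).2⟩
    · rw [fiberMap_apply_of_ne _ h]
      exact hx i
  let F : C(cube d, cube d) :=
    ⟨fun x => ⟨_, hmaps x.1 x.2⟩,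
      ((continuous_fiberMap hΦ).comp continuous_subtype_val).subtype_mk _⟩
  have hinj : Injective F := by
    intro x y hxy
    have hxy' : fiberMap i₀ i₁ Φ x.1 = fiberMap i₀ i₁ Φ y.1 := congrArg Subtype.val hxy
    have hoff : ∀ i ≠ i₁, x.1 i = y.1 i := fun i h => by
      simpa [h] using congrArg (· i) hxy'
    have hon : x.1 i₁ = y.1 i₁ :=
      (hmono (x.1 i₀)).injective (by simpa [hoff i₀ hne] using congrArg (· i₁) hxy')
    ext i
    rcases eq_or_ne i i₁ with rfl | h
    exacts [hon, hoff i h]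
  have hsurj : Surjective F := by
    rintro ⟨y, hy⟩
    obtain ⟨t, ht, hΦt⟩ : ∃ t ∈ Icc (0 : ℝ) 1, Φ (y i₀) t = y i₁ := by
      have hc : Continuous (Φ (y i₀)) := hΦ.comp (Continuous.prodMk_right (y i₀))
      have := intermediate_value_Icc zero_le_one hc.continuousOn
      rw [h₀, h₁] at this
      exact this (hy i₁)
    obtain ⟨x, hx, -, hxi₁, hxi⟩ := exists_mem_cube_dist_eq hy i₁ ht
    refine ⟨⟨x, hx⟩, Subtype.ext ?_⟩
    ext i
    rcases eq_or_ne i i₁ with rfl | h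
    · simp [F, hxi₁, hxi i₀ hne, hΦt]
    · simp [F, h, hxi i h]
  exact ⟨⟨F, isHomeomorph_iff_continuous_bijective.2 ⟨F.continuous, hinj, hsurj⟩⟩, fun x => rfl⟩

end fiberMap

noncomputable def oscAmp (E : ℝ) (n : ℕ) : ℝ := E / 2 * 16⁻¹ ^ n

noncomputable def edgeJump (E : ℝ) (k : ℕ) : ℝ := E / 4 * 2⁻¹ ^ k

section amplitudes

variable {E : ℝ}

lemma oscAmp_pos (hE : 0 < E) (n : ℕ) : 0 < oscAmp E n := by unfold oscAmp; positivity

lemma summable_oscAmp (E : ℝ) : Summable (oscAmp E) :=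
  (summable_geometric_of_lt_one (by norm_num) (by norm_num)).mul_left _

lemma tsum_oscAmp_add (E : ℝ) (k : ℕ) : ∑' m, oscAmp E (m + k) = 16 / 15 * oscAmp E k := by
  simp only [oscAmp, pow_add]
  rw [show (fun m : ℕ => E / 2 * (16⁻¹ ^ m * 16⁻¹ ^ k)) = fun m => E / 2 * 16⁻¹ ^ k * 16⁻¹ ^ m by
    ext m; ring, tsum_mul_left, tsum_geometric_of_lt_one (by norm_num) (by norm_num)]
  ring

lemma tsum_oscAmp_le (hE : 0 < E) : ∑' n, oscAmp E n ≤ E := by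
  have := tsum_oscAmp_add E 0
  simp only [add_zero] at this
  rw [this, oscAmp]
  linarith

lemma tsum_oscAmp_tail_le (hE : 0 < E) (n : ℕ) :
    ∑' m, oscAmp E (m + (n + 1)) ≤ oscAmp E n / 8 := by
  rw [tsum_oscAmp_add, oscAmp, oscAmp, pow_succ]
  have := oscAmp_pos hE n
  unfold oscAmp at this
  linarith

lemma edgeJump_pos (hE : 0 < E) (k : ℕ) : 0 < edgeJump E k := by unfold edgeJump; positivity

lemma summable_edgeJump (E : ℝ) : Summable (edgeJump E) :=
  (summable_geometric_of_lt_one (by norm_num) (by norm_num)).mul_left _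

lemma tsum_edgeJump (E : ℝ) : ∑' k, edgeJump E k = E / 2 := by
  simp only [edgeJump]
  rw [tsum_mul_left, tsum_geometric_inv_two]
  ring

end amplitudes

noncomputable def twist (E : ℝ) (S P : ℕ → ℝ) (s t : ℝ) : ℝ :=
  edgeStretch (edgeJump E) S (shear (lacunaryCos (oscAmp E) P s) t)

section twist

variable {E : ℝ} {S P : ℕ → ℝ}

lemma abs_lacunaryCos_oscAmp_le (hE : 0 < E) (s : ℝ) : |lacunaryCos (oscAmp E) P s| ≤ E :=
  (abs_lacunaryCos_le (fun n => (oscAmp_pos hE n).le) (summable_oscAmp E) s).trans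
    (tsum_oscAmp_le hE)

lemma continuous_twist (hE : 0 < E) : Continuous (uncurry (twist E S P)) := by
  have hc := continuous_lacunaryCos (P := P) (fun n => (oscAmp_pos hE n).le) (summable_oscAmp E)
  refine (continuous_edgeStretch (fun k => (edgeJump_pos hE k).le) (summable_edgeJump E)).comp ?_
  unfold shear
  fun_prop

lemma sub_div_two_le_edgeStretch_sub (hE : 0 < E) (hE₂ : E ≤ 1 / 2) (hS : ∀ k, 0 < S k)
    {t t' : ℝ} (h : t ≤ t') :
    (t' - t) / 2 ≤ edgeStretch (edgeJump E) S t' - edgeStretch (edgeJump E) S t := by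
  have h₁ := edgeStretch_sub_ge (fun k => (edgeJump_pos hE k).le) (summable_edgeJump E) hS h 0
  have h₂ := mul_nonneg (edgeJump_pos hE 0).le (sub_nonneg.2 (monotone_edgeBump (hS 0) h))
  rw [tsum_edgeJump] at h₁
  nlinarith

lemma strictMono_twist (hE : 0 < E) (hE₂ : E ≤ 1 / 2) (hS : ∀ k, 0 < S k) (s : ℝ) :
    StrictMono (twist E S P s) := fun t t' h => by
  have hc : |lacunaryCos (oscAmp E) P s| ≤ 1 / 2 := (abs_lacunaryCos_oscAmp_le hE s).trans hE₂
  have h₁ := sub_le_shear_sub hc h.le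
  have h₂ := sub_div_two_le_edgeStretch_sub hE hE₂ hS (show shear _ t ≤ shear _ t' by linarith)
  simp only [twist]
  linarith

lemma abs_sub_div_two_le_abs_edgeStretch_sub (hE : 0 < E) (hE₂ : E ≤ 1 / 2)
    (hS : ∀ k, 0 < S k) (A B : ℝ) :
    |A - B| / 2 ≤ |edgeStretch (edgeJump E) S A - edgeStretch (edgeJump E) S B| := by
  rcases le_total B A with h | h
  · rw [abs_of_nonneg (sub_nonneg.2 h)]
    exact (sub_div_two_le_edgeStretch_sub hE hE₂ hS h).trans (le_abs_self _)
  · rw [abs_sub_comm, abs_of_nonneg (sub_nonneg.2 h), abs_sub_comm]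
    exact (sub_div_two_le_edgeStretch_sub hE hE₂ hS h).trans (le_abs_self _)

lemma twist_zero (hS : ∀ k, 0 < S k) (hS₂ : ∀ k, S k ≤ 2) (s : ℝ) : twist E S P s 0 = 0 := by
  rw [twist, shear_apply_zero, edgeStretch_zero hS hS₂]

lemma twist_one (hS : ∀ k, 0 < S k) (hS₂ : ∀ k, S k ≤ 2) (s : ℝ) : twist E S P s 1 = 1 := by
  rw [twist, shear_apply_one, edgeStretch_one hS hS₂]

lemma abs_twist_sub_self_le (hE : 0 < E) (hE₂ : E ≤ 1 / 2) (s : ℝ) {t : ℝ}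
    (ht : t ∈ Icc (0 : ℝ) 1) : |twist E S P s t - t| ≤ 2 * E := by
  set c := lacunaryCos (oscAmp E) P s
  have hc : |c| ≤ E := abs_lacunaryCos_oscAmp_le hE s
  have h₁ := abs_edgeStretch_sub_self_le (S := S) (fun k => (edgeJump_pos hE k).le)
    (summable_edgeJump E) (shear_mem_Icc (hc.trans hE₂) ht)
  have h₂ : |shear c t - t| ≤ E := by
    have hw : |min t (1 - t)| ≤ 1 := by
      rw [abs_of_nonneg (le_min ht.1 (by linarith [ht.2]))]
      exact (min_le_left _ _).trans ht.2
    rw [shear, add_sub_cancel_left, abs_mul]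
    nlinarith [abs_nonneg c, abs_nonneg (min t (1 - t))]
  rw [tsum_edgeJump] at h₁
  calc |twist E S P s t - t| ≤ |twist E S P s t - shear c t| + |shear c t - t| := abs_sub_le _ _ _
    _ ≤ 2 * E := by rw [twist]; linarith

lemma exists_edgeJump_le_abs_twist_sub (hE : 0 < E) (hE₂ : E ≤ 1 / 2)
    (hS : ∀ k, 0 < S k) (hS₁ : ∀ k, S k ≤ 1) (s : ℝ) {t₀ : ℝ} (ht₀ : t₀ = 0 ∨ t₀ = 1) (k : ℕ) :
    ∃ t ∈ Icc (0 : ℝ) 1, |t - t₀| = S k ∧ edgeJump E k ≤ |twist E S P s t - twist E S P s t₀| := by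
  set c := lacunaryCos (oscAmp E) P s
  have hc : |c| ≤ 1 / 2 := (abs_lacunaryCos_oscAmp_le hE s).trans hE₂
  have hstretch {u u' : ℝ} (h : u ≤ u') := edgeStretch_sub_ge (fun j => (edgeJump_pos hE j).le)
    (summable_edgeJump E) hS h k
  have hS₂ k : S k ≤ 2 := (hS₁ k).trans one_le_two
  have hE' : 0 ≤ 1 - 2 * ∑' j, edgeJump E j := by rw [tsum_edgeJump]; linarith
  have hδ := edgeJump_pos hE k
  have hSk := hS k
  have hSk₁ := hS₁ k
  rcases ht₀ with rfl | rfl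
  · refine ⟨S k, ⟨hSk.le, hSk₁⟩, by rw [sub_zero, abs_of_pos hSk], ?_⟩
    have hψ := sub_le_shear_sub hc hSk.le
    rw [shear_apply_zero] at hψ
    have h := hstretch (show 0 ≤ shear c (S k) by linarith)
    have hbump := one_le_edgeBump hSk (show S k / 2 ≤ shear c (S k) by linarith)
    rw [edgeBump_zero hSk (hS₂ k), edgeStretch_zero hS hS₂] at h
    rw [twist, twist, shear_apply_zero, edgeStretch_zero hS hS₂, sub_zero]
    refine le_trans ?_ (le_abs_self _)
    nlinarith [mul_nonneg hE' (show 0 ≤ shear c (S k) - 0 by linarith)]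
  · refine ⟨1 - S k, ⟨by linarith, by linarith⟩,
      by rw [sub_sub_cancel_left, abs_neg, abs_of_pos hSk], ?_⟩
    have hψ := sub_le_shear_sub hc (show 1 - S k ≤ 1 by linarith)
    rw [shear_apply_one] at hψ
    have h := hstretch (show shear c (1 - S k) ≤ 1 by linarith)
    have hbump := edgeBump_le_one hSk (show shear c (1 - S k) ≤ 1 - S k / 2 by linarith)
    rw [edgeBump_one hSk (hS₂ k), edgeStretch_one hS hS₂] at h
    rw [twist, twist, shear_apply_one, edgeStretch_one hS hS₂, abs_sub_comm]
    refine le_trans ?_ (le_abs_self _)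
    nlinarith [mul_nonneg hE' (show 0 ≤ 1 - shear c (1 - S k) by linarith)]

lemma exists_abs_twist_sub_ge (hE : 0 < E) (hE₂ : E ≤ 1 / 2) (hS : ∀ k, 0 < S k)
    (hP : ∀ n, 0 < P n ∧ P n ≤ 1)
    (hlac : ∀ n, (∑ m ∈ Finset.range n, oscAmp E m * (2 * π / P m)) * P n ≤ oscAmp E n / 4)
    {n : ℕ} {s t : ℝ} (hs : s ∈ Icc (0 : ℝ) 1) (ht : 2⁻¹ ^ n ≤ min t (1 - t)) :
    ∃ z ∈ Icc (0 : ℝ) 1, |z - s| ≤ P n ∧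
      oscAmp E n * 2⁻¹ ^ n / 4 ≤ |twist E S P z t - twist E S P s t| := by
  obtain ⟨z, hz, hzs, hosc⟩ := exists_half_le_abs_lacunaryCos_sub (fun n => (oscAmp_pos hE n).le)
    (summable_oscAmp E) (tsum_oscAmp_tail_le hE) (fun n => (hP n).1) (hP n).2 (hlac n) hs
  refine ⟨z, hz, hzs, le_trans ?_ (abs_sub_div_two_le_abs_edgeStretch_sub hE hE₂ hS _ _)⟩
  have hw : 0 ≤ min t (1 - t) := (pow_nonneg (by norm_num) n).trans ht
  have hshear : |shear (lacunaryCos (oscAmp E) P z) t - shear (lacunaryCos (oscAmp E) P s) t| =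
      |lacunaryCos (oscAmp E) P z - lacunaryCos (oscAmp E) P s| * min t (1 - t) := by
    rw [← abs_of_nonneg hw, ← abs_mul, shear, shear]
    ring_nf
  rw [hshear]
  have := mul_le_mul hosc ht (pow_nonneg (by norm_num) n) (abs_nonneg _)
  linarith

end twist

section cube

variable {d : ℕ} {i₀ i₁ : Fin d} {E : ℝ} {S P : ℕ → ℝ}

lemma exists_edgeJump_le_dist_fiberMap_twist (hne : i₀ ≠ i₁) (hE : 0 < E) (hE₂ : E ≤ 1 / 2)
    (hS : ∀ k, 0 < S k) (hS₁ : ∀ k, S k ≤ 1) {x : EuclideanSpace ℝ (Fin d)} (hx : x ∈ cube d)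
    (hbd : x i₁ = 0 ∨ x i₁ = 1) (k : ℕ) :
    ∃ y ∈ cube d, dist x y ≤ S k ∧
      edgeJump E k ≤ dist (fiberMap i₀ i₁ (twist E S P) x) (fiberMap i₀ i₁ (twist E S P) y) := by
  obtain ⟨t, ht, hts, hjump⟩ := exists_edgeJump_le_abs_twist_sub (P := P) hE hE₂ hS hS₁ (x i₀) hbd k
  obtain ⟨y, hy, hxy, hyi₁, hyi⟩ := exists_mem_cube_dist_eq hx i₁ ht
  have hsep := abs_sub_le_dist_fiberMap (i₀ := i₀) (i₁ := i₁) (Φ := twist E S P) x y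
  rw [hyi i₀ hne, hyi₁, abs_sub_comm] at hsep
  exact ⟨y, hy, (hxy.trans hts).le, hjump.trans hsep⟩

lemma eventually_exists_le_dist_fiberMap_twist (hne : i₀ ≠ i₁) (hE : 0 < E) (hE₂ : E ≤ 1 / 2)
    (hS : ∀ k, 0 < S k) (hP : ∀ n, 0 < P n ∧ P n ≤ 1)
    (hlac : ∀ n, (∑ m ∈ Finset.range n, oscAmp E m * (2 * π / P m)) * P n ≤ oscAmp E n / 4)
    {x : EuclideanSpace ℝ (Fin d)} (hx : x ∈ cube d) (hint : x i₁ ≠ 0 ∧ x i₁ ≠ 1) :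
    ∀ᶠ n in atTop, ∃ y ∈ cube d, dist x y ≤ P n ∧ oscAmp E n * 2⁻¹ ^ n / 4 ≤
      dist (fiberMap i₀ i₁ (twist E S P) x) (fiberMap i₀ i₁ (twist E S P) y) := by
  have hw : 0 < min (x i₁) (1 - x i₁) :=
    lt_min ((hx i₁).1.lt_of_ne hint.1.symm) (sub_pos.2 ((hx i₁).2.lt_of_ne hint.2))
  filter_upwards [(tendsto_pow_atTop_nhds_zero_of_lt_one (by norm_num : (0 : ℝ) ≤ 2⁻¹)
    (by norm_num)).eventually (gt_mem_nhds hw)] with n hn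
  obtain ⟨z, hz, hzs, hosc⟩ := exists_abs_twist_sub_ge hE hE₂ hS hP hlac (hx i₀) hn.le
  obtain ⟨y, hy, hxy, hyi₀, hyi⟩ := exists_mem_cube_dist_eq hx i₀ hz
  have hsep := abs_sub_le_dist_fiberMap (i₀ := i₀) (i₁ := i₁) (Φ := twist E S P) x y
  rw [hyi₀, hyi i₁ hne.symm, abs_sub_comm] at hsep
  exact ⟨y, hy, hxy ▸ hzs, hosc.trans hsep⟩

end cube

theorem exists_homeoCube_frequently_lt_div_dist {d : ℕ} (hd : 2 ≤ d) {E : ℝ} (hE : 0 < E)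
    (hE₂ : E ≤ 1 / 2) {Y : Type*} [PseudoMetricSpace Y] {η : ℝ → ℝ} (hη : ∀ δ > 0, 0 < η δ) :
    ∃ f : HomeoCube d, (∀ x, dist (f.1 x) x ≤ 2 * E) ∧
      ∀ G : cube d → Y, (∀ δ > 0, ∀ a b, δ ≤ dist a b → η δ ≤ dist (G a) (G b)) →
        ∀ x C, ∃ᶠ y in 𝓝[≠] x, C < dist (G (f.1 x)) (G (f.1 y)) / dist x y := by
  obtain ⟨S, hS_lim, hS_pos, hS_le, hSη⟩ :=
    exists_tendsto_zero_succ_mul_le fun k => hη _ (edgeJump_pos hE k)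
  have hσ n : 0 < oscAmp E n * 2⁻¹ ^ n / 4 := by have := oscAmp_pos hE n; positivity
  obtain ⟨b, hb_lim, hb_pos, hb_le, hbη⟩ := exists_tendsto_zero_succ_mul_le fun n => hη _ (hσ n)
  set P := lacunaryPeriod (oscAmp E) b
  have hP_pos n : 0 < P n := lacunaryPeriod_pos (oscAmp_pos hE) hb_pos n
  have hS₂ k : S k ≤ 2 := (hS_le k).trans one_le_two
  let i₀ : Fin d := ⟨0, by omega⟩
  let i₁ : Fin d := ⟨1, by omega⟩
  have hne : i₀ ≠ i₁ := by simp [i₀, i₁, Fin.ext_iff]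
  obtain ⟨f, hf⟩ := exists_homeoCube_eq_fiberMap hne (continuous_twist (S := S) (P := P) hE)
    (strictMono_twist hE hE₂ hS_pos) (twist_zero hS_pos hS₂) (twist_one hS_pos hS₂)
  refine ⟨f, fun x => ?_, fun G hG x C => ?_⟩
  · rw [Subtype.dist_eq, hf, dist_fiberMap_self]
    exact abs_twist_sub_self_le hE hE₂ _ (x.2 i₁)
  by_cases hbd : x.1 i₁ = 0 ∨ x.1 i₁ = 1
  · refine frequently_lt_dist_comp_div_dist hG hS_lim (edgeJump_pos hE) hSη
      (Eventually.of_forall fun k => ?_) C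
    obtain ⟨y, hy, hxy, hsep⟩ :=
      exists_edgeJump_le_dist_fiberMap_twist hne hE hE₂ hS_pos hS_le x.2 hbd k
    exact ⟨⟨y, hy⟩, hxy, by rwa [Subtype.dist_eq, hf, hf]⟩
  · rw [not_or] at hbd
    have hP_lim : Tendsto P atTop (𝓝 0) :=
      squeeze_zero (fun n => (hP_pos n).le) (fun n => lacunaryPeriod_le n) hb_lim
    have hPη n : (n + 1) * P n ≤ η (oscAmp E n * 2⁻¹ ^ n / 4) :=
      (mul_le_mul_of_nonneg_left (lacunaryPeriod_le n) (by positivity)).trans (hbη n)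
    refine frequently_lt_dist_comp_div_dist hG hP_lim hσ hPη ?_ C
    filter_upwards [eventually_exists_le_dist_fiberMap_twist hne hE hE₂ hS_pos
      (fun n => ⟨hP_pos n, (lacunaryPeriod_le n).trans (hb_le n)⟩)
      (sum_mul_lacunaryPeriod_le (oscAmp_pos hE) hb_pos) x.2 hbd] with n ⟨y, hy, hxy, hsep⟩
    exact ⟨⟨y, hy⟩, hxy, by rwa [Subtype.dist_eq, hf, hf]⟩

/-- For `d ≥ 2`, every compact set `𝒦` of homeomorphisms of `[0,1]^d` and every
`ε > 0` admit a homeomorphism `f` with `‖f - id‖ ≤ 2ε` such that for every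
`g ∈ 𝒦` and every `x`, `limsup_{y→x} |g(f(x)) - g(f(y))| / |x - y| = ∞`;
in particular `g ∘ f` is nowhere differentiable for every `g ∈ 𝒦`. -/
theorem stmt13 (d : ℕ) (hd : 2 ≤ d) (𝒦 : Set (HomeoCube d)) (h𝒦 : IsCompact 𝒦)
    (ε : ℝ) (hε : 0 < ε) :
    ∃ f : HomeoCube d, (∀ x : ↥(cube d), dist (f.1 x) x ≤ 2 * ε) ∧
      ∀ g ∈ 𝒦, ∀ x : ↥(cube d), ∀ C : ℝ,
        ∃ᶠ y in 𝓝[≠] x, C < dist (g.1 (f.1 x)) (g.1 (f.1 y)) / dist x y := by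
  obtain ⟨η, hη⟩ : ∃ η : ℝ → ℝ, ∀ δ > 0, 0 < η δ ∧
      ∀ g ∈ 𝒦, ∀ a b, δ ≤ dist a b → η δ ≤ dist (g.1 a) (g.1 b) := by
    choose! η hη₀ hη using fun δ (hδ : 0 < δ) => ContinuousMap.exists_pos_le_dist_of_isCompact
      (h𝒦.image continuous_subtype_val) (by rintro _ ⟨g, -, rfl⟩; exact g.2.injective) hδ
    exact ⟨η, fun δ hδ => ⟨hη₀ δ hδ, fun g hg => hη δ hδ g.1 ⟨g, hg, rfl⟩⟩⟩
  obtain ⟨f, hf, hfreq⟩ := exists_homeoCube_frequently_lt_div_dist (Y := cube d) hd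
    (lt_min hε one_half_pos) (min_le_right ε (1 / 2)) fun δ hδ => (hη δ hδ).1
  exact ⟨f, fun x => (hf x).trans (by linarith [min_le_left ε (1 / 2)]),
    fun g hg => hfreq g.1 fun δ hδ => (hη δ hδ).2 g hg⟩
end lacunaryPeriod
end
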